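/- arXiv:2308.16425 — 2 statements merged into one kernel-verified Lean document; each statement's English description precedes it below -/
import Mathlib

section
/- The function f : [-1,1] → ℝ defined by f(x) = (√(1−x²) + (π − arccos x)·x)/π is twice differentiable on (−1,1) with f″(x) = 1/(π·√(1−x²)) > 0, hence f is strictly convex on (−1,1); moreover f(x) ≥ x for all x ∈ [−1,1], with equality if and only if x = 1. -/
/-!
Differentiating, `f' x = (π - arccos x) / π` (the terms `∓ x / √(1 - x²)` cancel), and
`f'' x = 1 / (π √(1 - x²)) > 0`. For the comparison with the diagonal,
`f x - x = (√(1 - x²) - x arccos x) / π`, which for `θ = arccos x ∈ (0, π]` is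
`(sin θ - θ cos θ) / π > 0`: below `π / 2` this is `θ < tan θ`, above it `cos θ ≤ 0`.
-/

open Real Set

/-- The dual kernel of the normalized ReLU activation `φ(x) = √2·max(x,0)`. -/
noncomputable def fDual (x : ℝ) : ℝ :=
  (Real.sqrt (1 - x ^ 2) + (Real.pi - Real.arccos x) * x) / Real.pi

lemma one_sub_sq_pos_of_mem_Ioo {x : ℝ} (hx : x ∈ Ioo (-1 : ℝ) 1) : 0 < 1 - x ^ 2 := by
  nlinarith [hx.1, hx.2]

lemma continuous_fDual : Continuous fDual := by
  unfold fDual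
  fun_prop

lemma fDual_sub_self (x : ℝ) : fDual x - x = (√(1 - x ^ 2) - x * arccos x) / π := by
  unfold fDual
  field_simp
  ring

lemma hasDerivAt_fDual {x : ℝ} (hx : x ∈ Ioo (-1 : ℝ) 1) :
    HasDerivAt fDual ((π - arccos x) / π) x := by
  have hsqrt : HasDerivAt (fun y : ℝ => √(1 - y ^ 2)) (-(2 * x) / (2 * √(1 - x ^ 2))) x := by
    simpa using ((hasDerivAt_pow 2 x).const_sub 1).sqrt (one_sub_sq_pos_of_mem_Ioo hx).ne'
  have hlin : HasDerivAt (fun y : ℝ => (π - arccos y) * y)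
      (1 / √(1 - x ^ 2) * x + (π - arccos x)) x :=
    (((hasDerivAt_arccos hx.1.ne' hx.2.ne).const_sub π).mul (hasDerivAt_id x)).congr_deriv
      (by simp)
  have hsqrt_ne : √(1 - x ^ 2) ≠ 0 := (sqrt_pos.2 (one_sub_sq_pos_of_mem_Ioo hx)).ne'
  exact ((hsqrt.add hlin).div_const π).congr_deriv (by field_simp; ring)

lemma hasDerivAt_deriv_fDual {x : ℝ} (hx : x ∈ Ioo (-1 : ℝ) 1) :
    HasDerivAt (deriv fDual) (1 / (π * √(1 - x ^ 2))) x := by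
  have h : HasDerivAt (fun y : ℝ => (π - arccos y) / π) (1 / (π * √(1 - x ^ 2))) x := by
    have := ((hasDerivAt_arccos hx.1.ne' hx.2.ne).const_sub π).div_const π
    exact this.congr_deriv (by field_simp)
  refine h.congr_of_eventuallyEq ?_
  filter_upwards [Ioo_mem_nhds hx.1 hx.2] with y hy
  exact (hasDerivAt_fDual hy).deriv

lemma mul_cos_lt_sin {θ : ℝ} (h0 : 0 < θ) (hπ : θ ≤ π) : θ * cos θ < sin θ := by
  rcases lt_or_ge θ (π / 2) with hθ | hθ
  · have hcos : 0 < cos θ := cos_pos_of_mem_Ioo ⟨by linarith, hθ⟩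
    have htan : θ < sin θ / cos θ := tan_eq_sin_div_cos θ ▸ lt_tan h0 hθ
    exact (lt_div_iff₀ hcos).1 htan
  · have hcos : cos θ ≤ 0 := cos_nonpos_of_pi_div_two_le_of_le hθ (by linarith)
    rcases hπ.lt_or_eq with hlt | rfl
    · nlinarith [sin_pos_of_pos_of_lt_pi h0 hlt]
    · simp [pi_pos]

lemma mul_arccos_lt_sqrt_one_sub_sq {x : ℝ} (h1 : -1 ≤ x) (h2 : x < 1) :
    x * arccos x < √(1 - x ^ 2) := by
  have h := mul_cos_lt_sin (arccos_pos.2 h2) (arccos_le_pi x)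
  rwa [cos_arccos h1 h2.le, sin_arccos, mul_comm] at h

lemma self_lt_fDual {x : ℝ} (h1 : -1 ≤ x) (h2 : x < 1) : x < fDual x := by
  have h := div_pos (sub_pos.2 (mul_arccos_lt_sqrt_one_sub_sq h1 h2)) pi_pos
  rw [← fDual_sub_self] at h
  linarith

lemma fDual_one : fDual 1 = 1 := by
  simp [fDual, pi_ne_zero]

theorem stmt_1 :
    (∀ x ∈ Set.Ioo (-1 : ℝ) 1,
      HasDerivAt (deriv fDual) (1 / (Real.pi * Real.sqrt (1 - x ^ 2))) x ∧
      0 < 1 / (Real.pi * Real.sqrt (1 - x ^ 2))) ∧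
    StrictConvexOn ℝ (Set.Ioo (-1 : ℝ) 1) fDual ∧
    (∀ x ∈ Set.Icc (-1 : ℝ) 1, x ≤ fDual x ∧ (fDual x = x ↔ x = 1)) := by
  have hpos : ∀ x ∈ Ioo (-1 : ℝ) 1, 0 < 1 / (π * √(1 - x ^ 2)) := fun x hx =>
    one_div_pos.2 (mul_pos pi_pos (sqrt_pos.2 (one_sub_sq_pos_of_mem_Ioo hx)))
  refine ⟨fun x hx => ⟨hasDerivAt_deriv_fDual hx, hpos x hx⟩, ?_, ?_⟩
  · refine strictConvexOn_of_deriv2_pos' (convex_Ioo _ _) continuous_fDual.continuousOn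
      fun x hx => ?_
    simpa [(hasDerivAt_deriv_fDual hx).deriv] using hpos x hx
  · rintro x ⟨h1, h2⟩
    rcases h2.lt_or_eq with hlt | rfl
    · have hlt' := self_lt_fDual h1 hlt
      exact ⟨hlt'.le, ⟨fun h => absurd h hlt'.ne', fun h => absurd h hlt.ne⟩⟩
    · simp [fDual_one]
end

section
/- Let φ(x) = √2·max(x,0) be the normalized ReLU and let ρ ∈ [−1,1]. If z₁, z₂ are independent standard Gaussian random variables and one sets u = z₁ and v = ρ·z₁ + √(1−ρ²)·z₂ (so that (u,v) is a centered Gaussian pair with unit variances and correlation ρ), then E[φ(u)·φ(v)] = (√(1−ρ²) + (π − arccos ρ)·ρ)/π. In particular E[φ(z₁)²] = 1. -/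
/-!
With `β = arccos ρ ∈ [0, π]` one has `ρ = cos β` and `√(1 - ρ²) = sin β`. In polar coordinates
`z = r (cos θ, sin θ)` the pair `(u, v)` becomes `(r cos θ, r cos (θ - β))`, and positive
homogeneity of the ReLU splits the expectation into a radial factor
`∫₀^∞ r³ e^{-r²/2} dr = 2` and an angular factor, the integral of `cos θ cos (θ - β)` over the arc
`(β - π/2, π/2)` where both cosines are positive, which equals `(sin β + (π - β) cos β) / 2`.
The second moment is the case `β = 0`.
-/

open MeasureTheory ProbabilityTheory Real

/-- The normalized ReLU activation. -/
noncomputable def normReLU (x : ℝ) : ℝ := Real.sqrt 2 * max x 0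

open scoped NNReal
open Set

lemma normReLU_mul_of_nonneg {r : ℝ} (hr : 0 ≤ r) (x : ℝ) :
    normReLU (r * x) = r * normReLU x := by
  rw [normReLU, normReLU, ← mul_zero r, ← mul_max_of_nonneg _ _ hr, mul_zero]
  ring

lemma normReLU_mul_normReLU (x y : ℝ) :
    normReLU x * normReLU y = 2 * (max x 0 * max y 0) := by
  simp only [normReLU]
  linear_combination (max x 0 * max y 0) * mul_self_sqrt (zero_le_two : (0 : ℝ) ≤ 2)

lemma integral_prod_gaussianReal {E : Type*} [NormedAddCommGroup E] [NormedSpace ℝ E]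
    (μ₁ μ₂ : ℝ) {v₁ v₂ : ℝ≥0} (hv₁ : v₁ ≠ 0) (hv₂ : v₂ ≠ 0) (f : ℝ × ℝ → E) :
    ∫ z, f z ∂(gaussianReal μ₁ v₁).prod (gaussianReal μ₂ v₂)
      = ∫ z, (gaussianPDFReal μ₁ v₁ z.1 * gaussianPDFReal μ₂ v₂ z.2) • f z := by
  rw [gaussianReal_of_var_ne_zero _ hv₁, gaussianReal_of_var_ne_zero _ hv₂,
    prod_withDensity (measurable_gaussianPDF _ _) (measurable_gaussianPDF _ _),
    ← Measure.volume_eq_prod, integral_withDensity_eq_integral_toReal_smul (by fun_prop)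
      (ae_of_all _ fun _ ↦ ENNReal.mul_lt_top gaussianPDF_lt_top gaussianPDF_lt_top)]
  simp only [ENNReal.toReal_mul, toReal_gaussianPDF]

lemma gaussianPDFReal_mul_gaussianPDFReal_polar (r θ : ℝ) :
    gaussianPDFReal 0 1 (r * cos θ) * gaussianPDFReal 0 1 (r * sin θ)
      = (2 * π)⁻¹ * exp (-r ^ 2 / 2) := by
  have h2π : √(2 * π) * √(2 * π) = 2 * π := mul_self_sqrt (by positivity)
  simp only [gaussianPDFReal, NNReal.coe_one, mul_one, sub_zero, ← mul_inv,
    mul_mul_mul_comm _ (exp _), ← exp_add, h2π]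
  congr 2
  linear_combination (-r ^ 2 / 2) * sin_sq_add_cos_sq θ

lemma integral_prod_gaussianReal_eq_polar (f : ℝ × ℝ → ℝ) :
    ∫ z, f z ∂(gaussianReal 0 1).prod (gaussianReal 0 1)
      = (2 * π)⁻¹ * ∫ p in Ioi 0 ×ˢ Ioo (-π) π,
          p.1 * exp (-p.1 ^ 2 / 2) * f (p.1 * cos p.2, p.1 * sin p.2) := by
  rw [integral_prod_gaussianReal _ _ one_ne_zero one_ne_zero, ← integral_comp_polarCoord_symm,
    polarCoord_target, ← integral_const_mul]
  refine setIntegral_congr_fun (measurableSet_Ioi.prod measurableSet_Ioo) fun p _ ↦ ?_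
  simp only [polarCoord_symm_apply, smul_eq_mul, gaussianPDFReal_mul_gaussianPDFReal_polar]
  ring

lemma integral_Ioi_pow_three_mul_exp_neg_sq_div_two :
    ∫ r in Ioi (0 : ℝ), r ^ 3 * exp (-r ^ 2 / 2) = 2 := by
  have h := integral_rpow_mul_exp_neg_mul_rpow (p := 2) (q := 3) (b := 1 / 2)
    two_pos (by norm_num) (by norm_num)
  norm_num at h
  simpa only [neg_div, one_div, inv_mul_eq_div] using h

lemma integral_cos_mul_cos_sub (β : ℝ) :
    ∫ θ in (β - π / 2)..(π / 2), cos θ * cos (θ - β) = (sin β + (π - β) * cos β) / 2 := by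
  have hderiv (θ : ℝ) : HasDerivAt (fun t ↦ sin (2 * t - β) / 4 + t * cos β / 2)
      (cos θ * cos (θ - β)) θ := by
    refine (((((hasDerivAt_id' θ).const_mul 2).sub_const β).sin.div_const 4).add
      (((hasDerivAt_id' θ).mul_const (cos β)).div_const 2)).congr_deriv ?_
    rw [cos_sub, cos_sub, cos_two_mul, sin_two_mul]
    ring
  rw [intervalIntegral.integral_eq_sub_of_hasDerivAt (fun θ _ ↦ hderiv θ)
    (by apply Continuous.intervalIntegrable; fun_prop)]
  rw [show 2 * (π / 2) - β = π - β by ring, show 2 * (β - π / 2) - β = -(π - β) by ring,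
    sin_neg, sin_pi_sub]
  ring

lemma max_cos_mul_max_cos_sub_eq_indicator {β θ : ℝ} (hβ : β ∈ Icc 0 π) (hθ : θ ∈ Ioo (-π) π) :
    max (cos θ) 0 * max (cos (θ - β)) 0
      = (Ioo (β - π / 2) (π / 2)).indicator (fun t ↦ cos t * cos (t - β)) θ := by
  obtain ⟨hβ₀, hβπ⟩ := hβ
  obtain ⟨hθ₁, hθ₂⟩ := hθ
  by_cases h : θ ∈ Ioo (β - π / 2) (π / 2)
  · rw [indicator_of_mem h, max_eq_left, max_eq_left] <;>
      exact cos_nonneg_of_mem_Icc ⟨by linarith [h.1], by linarith [h.2]⟩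
  rw [indicator_of_notMem h]
  rcases lt_or_ge θ (-(π / 2)) with hθ_neg | hθ_neg
  · rw [max_eq_right, zero_mul]
    rw [← cos_neg]
    exact cos_nonpos_of_pi_div_two_le_of_le (by linarith) (by linarith)
  rcases le_or_gt (π / 2) θ with hθ_pos | hθ_pos
  · rw [max_eq_right (cos_nonpos_of_pi_div_two_le_of_le hθ_pos (by linarith)), zero_mul]
  have hθβ : θ ≤ β - π / 2 := by
    by_contra! h'
    exact h ⟨h', hθ_pos⟩
  rw [max_eq_right (b := 0) (a := cos (θ - β)), mul_zero]
  rw [← cos_neg]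
  exact cos_nonpos_of_pi_div_two_le_of_le (by linarith) (by linarith)

lemma integral_max_cos_mul_max_cos_sub {β : ℝ} (hβ : β ∈ Icc 0 π) :
    ∫ θ in Ioo (-π) π, max (cos θ) 0 * max (cos (θ - β)) 0
      = (sin β + (π - β) * cos β) / 2 := by
  have hsub : Ioo (β - π / 2) (π / 2) ⊆ Ioo (-π) π :=
    Ioo_subset_Ioo (by linarith [hβ.1, pi_pos]) (by linarith [pi_pos])
  rw [setIntegral_congr_fun measurableSet_Ioo
      fun θ hθ ↦ max_cos_mul_max_cos_sub_eq_indicator hβ hθ,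
    setIntegral_indicator measurableSet_Ioo, inter_eq_self_of_subset_right hsub,
    ← integral_Ioc_eq_integral_Ioo, ← intervalIntegral.integral_of_le (by linarith [hβ.2]),
    integral_cos_mul_cos_sub]

lemma integral_normReLU_mul_normReLU_cos_sin {β : ℝ} (hβ : β ∈ Icc 0 π) :
    ∫ z : ℝ × ℝ, normReLU z.1 * normReLU (cos β * z.1 + sin β * z.2)
        ∂(gaussianReal 0 1).prod (gaussianReal 0 1)
      = (sin β + (π - β) * cos β) / π := by
  have hpolar : ∀ p ∈ Ioi (0 : ℝ) ×ˢ Ioo (-π) π,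
      p.1 * exp (-p.1 ^ 2 / 2) * (normReLU (p.1 * cos p.2) *
        normReLU (cos β * (p.1 * cos p.2) + sin β * (p.1 * sin p.2)))
      = 2 * (p.1 ^ 3 * exp (-p.1 ^ 2 / 2)) * (max (cos p.2) 0 * max (cos (p.2 - β)) 0) := by
    rintro ⟨r, θ⟩ ⟨hr, -⟩
    have hrot : cos β * (r * cos θ) + sin β * (r * sin θ) = r * cos (θ - β) := by
      rw [cos_sub]; ring
    simp only [hrot, normReLU_mul_of_nonneg (le_of_lt hr), mul_mul_mul_comm r _ r,
      normReLU_mul_normReLU]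
    ring
  rw [integral_prod_gaussianReal_eq_polar, setIntegral_congr_fun
      (measurableSet_Ioi.prod measurableSet_Ioo) hpolar, Measure.volume_eq_prod,
    setIntegral_prod_mul (fun r ↦ 2 * (r ^ 3 * exp (-r ^ 2 / 2)))
      (fun θ ↦ max (cos θ) 0 * max (cos (θ - β)) 0),
    integral_const_mul, integral_Ioi_pow_three_mul_exp_neg_sq_div_two,
    integral_max_cos_mul_max_cos_sub hβ]
  field_simp

theorem stmt_2 (ρ : ℝ) (hρ : ρ ∈ Set.Icc (-1 : ℝ) 1) :
    (∫ z : ℝ × ℝ,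
        normReLU z.1 * normReLU (ρ * z.1 + Real.sqrt (1 - ρ ^ 2) * z.2)
        ∂((gaussianReal 0 1).prod (gaussianReal 0 1)))
      = (Real.sqrt (1 - ρ ^ 2) + (Real.pi - Real.arccos ρ) * ρ) / Real.pi ∧
    (∫ z : ℝ, normReLU z ^ 2 ∂(gaussianReal 0 1)) = 1 := by
  constructor
  · simpa only [cos_arccos hρ.1 hρ.2, sin_arccos] using
      integral_normReLU_mul_normReLU_cos_sin ⟨arccos_nonneg ρ, arccos_le_pi ρ⟩
  · have h := integral_normReLU_mul_normReLU_cos_sin ⟨le_rfl, pi_pos.le⟩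
    simp only [cos_zero, sin_zero, one_mul, zero_mul, add_zero, sub_zero, zero_add, mul_one,
      div_self pi_ne_zero] at h
    rw [← h, integral_fun_fst (fun x ↦ normReLU x * normReLU x)]
    simp [sq]
end
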